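/- For every prime number p, the quadratic form x₁² + x₂² + x₃² + x₄² in four variables over the field ℚ_p of p-adic numbers is equivalent (isometric) to the quadratic form −x₁² − x₂² − x₃² − x₄². -/

import Mathlib

/-!
Left multiplication by a quaternion `q` multiplies the norm form `x₁² + x₂² + x₃² + x₄²`
by `normSq q` (multiplicativity of the quaternion norm), and is invertible when `normSq q` is
a unit.
So it suffices to write `-1` as a sum of four squares in `ℚ_[p]`. For odd `p`, a solution of
`a² + b² + 1 ≡ 0 (mod p)` with `p ∤ a` lifts to `ℤ_[p]` by Hensel's lemma; for `p = 2`,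
Hensel's lemma makes `-7` a square, and `-1 = 2² + 1² + 1² - 7`.
-/

open QuadraticMap

namespace PadicInt

open Polynomial

variable {p : ℕ} [Fact p.Prime]

theorem isSquare_neg_of_norm_sq_add_lt {a c : ℤ_[p]} (h : ‖a ^ 2 + c‖ < ‖2 * a‖ ^ 2) :
    IsSquare (-c) := by
  have hF : ‖(X ^ 2 + C c).aeval a‖ < ‖(X ^ 2 + C c).derivative.aeval a‖ ^ 2 := by
    rwa [derivative_add, derivative_C, add_zero, derivative_X_pow, map_add, aeval_X_pow, aeval_C,
      map_mul, aeval_C, aeval_X_pow, pow_one]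
  obtain ⟨z, hz, -⟩ := hensels_lemma hF
  exact ⟨z, by linear_combination (-1 : ℤ_[p]) * (by simpa using hz : z ^ 2 + c = 0)⟩

theorem exists_sq_add_sq_eq_neg_one (hp : p ≠ 2) : ∃ a b : ℤ_[p], a ^ 2 + b ^ 2 = -1 := by
  obtain ⟨a, b, k, -, -, hab⟩ := Int.exists_sq_add_sq_add_one_eq_mul p
  wlog ha : ¬ p ∣ a generalizing a b
  · refine this b a (by linarith) fun hb => (Fact.out : p.Prime).not_dvd_one ?_
    exact (Nat.dvd_add_right (dvd_add (dvd_pow (not_not.mp ha) two_ne_zero)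
      (dvd_pow hb two_ne_zero))).mp (hab ▸ dvd_mul_left p k)
  have hsum : ‖(a : ℤ_[p]) ^ 2 + ((b : ℤ_[p]) ^ 2 + 1)‖ < 1 := by
    rw [← add_assoc]
    exact_mod_cast norm_natCast_lt_one_iff.mpr (hab ▸ dvd_mul_left p k)
  have hunit : ‖2 * (a : ℤ_[p])‖ = 1 := by
    exact_mod_cast norm_natCast_eq_one_iff.mpr
      (Nat.Coprime.mul_right ((Nat.coprime_primes Fact.out Nat.prime_two).mpr hp)
        ((Nat.Prime.coprime_iff_not_dvd Fact.out).mpr ha))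
  obtain ⟨z, hz⟩ := isSquare_neg_of_norm_sq_add_lt (by rwa [hunit, one_pow])
  exact ⟨b, z, by linear_combination -hz⟩

theorem exists_sum_four_sq_eq_neg_one (p : ℕ) [Fact p.Prime] :
    ∃ a b c d : ℤ_[p], a ^ 2 + b ^ 2 + c ^ 2 + d ^ 2 = -1 := by
  rcases eq_or_ne p 2 with rfl | hp
  · have h2 : ‖(2 : ℤ_[2])‖ = 2⁻¹ := by simpa using norm_p (p := 2)
    obtain ⟨z, hz⟩ := isSquare_neg_of_norm_sq_add_lt (p := 2) (a := 1) (c := 7) (by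
      rw [show (1 : ℤ_[2]) ^ 2 + 7 = 2 ^ 3 by norm_num, mul_one, norm_pow, h2]; norm_num)
    exact ⟨2, 1, 1, z, by linear_combination -hz⟩
  · obtain ⟨a, b, hab⟩ := exists_sq_add_sq_eq_neg_one hp
    exact ⟨a, b, 0, 0, by simpa using hab⟩

end PadicInt

theorem QuadraticMap.weightedSumSquares_const_apply {R ι : Type*} [CommSemiring R] [Fintype ι]
    (c : R) (v : ι → R) :
    weightedSumSquares R (fun _ : ι => c) v =
      c * weightedSumSquares R (fun _ : ι => (1 : R)) v := by
  simp [weightedSumSquares_apply, Finset.mul_sum]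

namespace Quaternion

variable {R : Type*} [CommRing R]

noncomputable def unitOfIsUnitNormSq {q : ℍ[R]} (hq : IsUnit (normSq q)) : ℍ[R]ˣ where
  val := q
  inv := ((hq.unit⁻¹ : Rˣ) : R) • star q
  val_inv := by
    rw [mul_smul_comm, self_mul_star, ← coe_smul, smul_eq_mul, IsUnit.val_inv_mul, coe_one]
  inv_val := by
    rw [smul_mul_assoc, star_mul_self, ← coe_smul, smul_eq_mul, IsUnit.val_inv_mul, coe_one]

theorem weightedSumSquares_one_equivTuple (q : ℍ[R]) :
    weightedSumSquares R (fun _ : Fin 4 => (1 : R)) (equivTuple R q) = normSq q := by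
  simp [weightedSumSquares_apply, Fin.sum_univ_four, equivTuple_apply, normSq_def', _root_.sq]

theorem weightedSumSquares_one_equivalent_normSq {q : ℍ[R]} (hq : IsUnit (normSq q)) :
    (weightedSumSquares R fun _ : Fin 4 => (1 : R)).Equivalent
      (weightedSumSquares R fun _ : Fin 4 => normSq q) := by
  let T : ℍ[R] ≃ₗ[R] (Fin 4 → R) := QuaternionAlgebra.linearEquivTuple (-1) 0 (-1)
  refine .symm ⟨⟨T.symm ≪≫ₗ (unitOfIsUnitNormSq hq).mulLeftLinearEquiv R _ ≪≫ₗ T, fun x => ?_⟩⟩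
  obtain ⟨x, rfl⟩ := T.surjective x
  change weightedSumSquares R _ (equivTuple R (q * x)) =
    weightedSumSquares R _ (equivTuple R x)
  rw [weightedSumSquares_const_apply (normSq q), weightedSumSquares_one_equivTuple,
    weightedSumSquares_one_equivTuple, map_mul]

end Quaternion

theorem sum_four_squares_equiv_neg_sum_four_squares_padic (p : ℕ) [Fact p.Prime] :
    (QuadraticMap.weightedSumSquares ℚ_[p] (fun _ : Fin 4 => (1 : ℚ_[p]))).Equivalent
      (QuadraticMap.weightedSumSquares ℚ_[p] (fun _ : Fin 4 => (-1 : ℚ_[p]))) := by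
  obtain ⟨a, b, c, d, habcd⟩ := PadicInt.exists_sum_four_sq_eq_neg_one p
  let q : Quaternion ℚ_[p] := ⟨a, b, c, d⟩
  have hq : Quaternion.normSq q = -1 := by
    rw [Quaternion.normSq_def']
    exact_mod_cast congrArg ((↑) : ℤ_[p] → ℚ_[p]) habcd
  have hunit : IsUnit (Quaternion.normSq q) := hq ▸ isUnit_one.neg
  have hequiv := Quaternion.weightedSumSquares_one_equivalent_normSq hunit
  rwa [hq] at hequiv
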